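/- arXiv:1301.0140 — 2 statements merged into one kernel-verified Lean document; each statement's English description precedes it below -/
import Mathlib

section
/- (Sugeno–Murofushi) Let ⊙ be a pseudo-multiplication on [0,∞], and let ν, τ be σ-maxitive measures on a measurable space (E, 𝔅). Assume that τ is σ-⊙-finite and σ-principal. Then ν ≪⊙ τ if and only if there exists a measurable map c : E → [0,∞] such that ν(B) = ∫_B c ⊙ dτ for all measurable sets B. -/
open scoped ENNReal
open Set

/-- A pseudo-multiplication on `[0,∞]`: associative, monotone in each argument,
continuous on `(0,∞) × [0,∞]`, with `s ↦ s ⊙ t` continuous on `(0,∞]`,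
admitting a left identity, without zero divisors, and with `0` as annihilator. -/
structure PseudoMul where
  op : ℝ≥0∞ → ℝ≥0∞ → ℝ≥0∞
  assoc : ∀ a b c, op (op a b) c = op a (op b c)
  mono_left : ∀ t, Monotone fun s => op s t
  mono_right : ∀ s, Monotone fun t => op s t
  continuousOn : ContinuousOn (fun p : ℝ≥0∞ × ℝ≥0∞ => op p.1 p.2) (Ioo 0 ⊤ ×ˢ univ)
  continuousOn_left : ∀ t, ContinuousOn (fun s => op s t) (Ioi 0)
  one : ℝ≥0∞
  one_op : ∀ t, op one t = t
  no_zero_divisors : ∀ s t, op s t = 0 → s = 0 ∨ t = 0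
  zero_op : ∀ t, op 0 t = 0
  op_zero : ∀ t, op t 0 = 0

/-- An element `t` is `⊙`-finite if `⨅_{s>0} s ⊙ t = 0`. -/
def PseudoMul.OFinite (P : PseudoMul) (t : ℝ≥0∞) : Prop :=
  ⨅ s ∈ Ioi (0 : ℝ≥0∞), P.op s t = 0

/-- `⊙` is non-degenerate if its left identity is `⊙`-finite. -/
def PseudoMul.Nondegenerate (P : PseudoMul) : Prop :=
  P.OFinite P.one

/-- A σ-maxitive measure: vanishes on `∅` and turns countable unions of
measurable sets into suprema. -/
def SigmaMaxitive {E : Type*} [MeasurableSpace E] (ν : Set E → ℝ≥0∞) : Prop :=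
  ν ∅ = 0 ∧ ∀ B : ℕ → Set E, (∀ n, MeasurableSet (B n)) →
    ν (⋃ n, B n) = ⨆ n, ν (B n)

/-- The idempotent `⊙`-integral `∫_B f ⊙ dν = ⨆_{t ∈ [0,∞)} t ⊙ ν(B ∩ {f > t})`. -/
noncomputable def idemInt {E : Type*} [MeasurableSpace E] (P : PseudoMul) (ν : Set E → ℝ≥0∞)
    (f : E → ℝ≥0∞) (B : Set E) : ℝ≥0∞ :=
  ⨆ t ∈ Iio (⊤ : ℝ≥0∞), P.op t (ν (B ∩ {x | t < f x}))

/-- `ν ≪⊙ τ`: `ν(B) ≤ ∞ ⊙ τ(B)` whenever `τ(B)` is `⊙`-finite. -/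
def OAbsCont {E : Type*} [MeasurableSpace E] (P : PseudoMul)
    (ν τ : Set E → ℝ≥0∞) : Prop :=
  ∀ B : Set E, MeasurableSet B → P.OFinite (τ B) → ν B ≤ P.op ⊤ (τ B)

/-- `τ` is σ-`⊙`-finite. -/
def SigmaOFinite {E : Type*} [MeasurableSpace E] (P : PseudoMul)
    (τ : Set E → ℝ≥0∞) : Prop :=
  ∃ B : ℕ → Set E, (∀ n, MeasurableSet (B n)) ∧ (⋃ n, B n) = univ ∧
    ∀ n, P.OFinite (τ (B n))

/-- A σ-ideal of the σ-algebra: a nonempty collection of measurable sets closed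
under countable unions and under measurable subsets. -/
def IsSigmaIdeal {E : Type*} [MeasurableSpace E] (I : Set (Set E)) : Prop :=
  I.Nonempty ∧ (∀ A ∈ I, MeasurableSet A) ∧
    (∀ B : ℕ → Set E, (∀ n, B n ∈ I) → (⋃ n, B n) ∈ I) ∧
    (∀ A B : Set E, B ∈ I → A ⊆ B → MeasurableSet A → A ∈ I)

/-- `τ` is σ-principal. -/
def SigmaPrincipal {E : Type*} [MeasurableSpace E] (τ : Set E → ℝ≥0∞) : Prop :=
  ∀ I : Set (Set E), IsSigmaIdeal I → ∃ L ∈ I, ∀ S ∈ I, τ (S \ L) = 0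

/-- `τ` has the Radon–Nikodym property w.r.t. the idempotent `⊙`-integral. -/
def HasRNP {E : Type*} [MeasurableSpace E] (P : PseudoMul)
    (τ : Set E → ℝ≥0∞) : Prop :=
  ∀ ν : Set E → ℝ≥0∞, SigmaMaxitive ν → OAbsCont P ν τ →
    ∃ c : E → ℝ≥0∞, Measurable c ∧
      ∀ B : Set E, MeasurableSet B → ν B = idemInt P τ c B

/-! For rational `q`, σ-principality provides an essential supremum `M q` of the σ-ideal of sets
on whose subsets `ν ≤ q ⊙ τ`, and these can be chosen increasing in `q`; the density is
`c x = inf {q | x ∈ M q}`. By construction `ν ≤ w ⊙ τ` on `{c < w}`, and maximality of `M q`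
gives `q ⊙ τ ≤ ν` off `M q`, which bounds the integral by `ν`. Conversely, on a set `A` of
`⊙`-finite mass, σ-maxitivity shows that `ν A` is attained at a single level `T` of `c`: for
`u < T < w` it is carried by `{u < c < w}`, so `ν A ≤ w ⊙ τ (A ∩ {u < c})`, and continuity of
`⊙` lets `w` decrease and `u` increase to `T`. The part `{c = ∞}` is controlled by `ν ≪⊙ τ`, and
σ-`⊙`-finiteness removes the finiteness assumption on `A`. -/

namespace PseudoMul

variable (P : PseudoMul)

theorem continuousAt_op_left {t : ℝ≥0∞} (ht : 0 < t) (a : ℝ≥0∞) :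
    ContinuousAt (fun s => P.op s a) t :=
  (P.continuousOn_left a).continuousAt (isOpen_Ioi.mem_nhds ht)

theorem continuous_op_right {t : ℝ≥0∞} (h0 : 0 < t) (ht : t < ⊤) : Continuous (P.op t) :=
  continuous_iff_continuousAt.2 fun a =>
    (P.continuousOn.continuousAt
      ((isOpen_Ioo.prod isOpen_univ).mem_nhds ⟨⟨h0, ht⟩, mem_univ a⟩)).comp
        (continuous_const.prodMk continuous_id).continuousAt

theorem op_iSup_right {t : ℝ≥0∞} (h0 : 0 < t) (ht : t < ⊤) {ι : Sort*} (g : ι → ℝ≥0∞) :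
    P.op t (⨆ i, g i) = ⨆ i, P.op t (g i) :=
  Monotone.map_iSup_of_continuousAt (P.continuous_op_right h0 ht).continuousAt (P.mono_right t)
    (P.op_zero t)

theorem op_iInf_right {t : ℝ≥0∞} (h0 : 0 < t) (ht : t < ⊤) {ι : Sort*} [Nonempty ι]
    (g : ι → ℝ≥0∞) : P.op t (⨅ i, g i) = ⨅ i, P.op t (g i) :=
  Monotone.map_ciInf_of_continuousAt (P.continuous_op_right h0 ht).continuousAt (P.mono_right t)

theorem op_eq_iSup_lt_left {t : ℝ≥0∞} (ht : 0 < t) (a : ℝ≥0∞) :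
    P.op t a = ⨆ s : Iio t, P.op s a := by
  conv_lhs => rw [← (Order.IsSuccPrelimit.of_dense t).iSup_Iio]
  refine Monotone.map_iSup_of_continuousAt ?_ (P.mono_left a) (P.zero_op a)
  rw [(Order.IsSuccPrelimit.of_dense t).iSup_Iio]
  exact P.continuousAt_op_left ht a

theorem op_eq_iInf_gt_left {t : ℝ≥0∞} (h0 : 0 < t) (ht : t < ⊤) (a : ℝ≥0∞) :
    P.op t a = ⨅ s : Ioi t, P.op s a := by
  have hinf : ⨅ s : Ioi t, (s : ℝ≥0∞) = t := by
    refine le_antisymm (le_of_forall_gt fun c hc => ?_) (le_iInf fun s => s.2.le)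
    obtain ⟨s, hts, hsc⟩ := exists_between hc
    exact (iInf_le _ ⟨s, hts⟩).trans_lt hsc
  have : Nonempty (Ioi t) := ⟨⟨⊤, ht⟩⟩
  conv_lhs => rw [← hinf]
  refine Monotone.map_ciInf_of_continuousAt ?_ (P.mono_left a)
  rw [hinf]
  exact P.continuousAt_op_left h0 a

theorem OFinite.mono {P : PseudoMul} {a b : ℝ≥0∞} (hb : P.OFinite b) (hab : a ≤ b) :
    P.OFinite a :=
  le_antisymm ((iInf₂_mono fun s _ => P.mono_right s hab).trans hb.le) zero_le

end PseudoMul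

namespace SigmaMaxitive

variable {E : Type*} [MeasurableSpace E] {μ : Set E → ℝ≥0∞}

theorem iUnion (hμ : SigmaMaxitive μ) {ι : Type*} [Countable ι] {A : ι → Set E}
    (hA : ∀ i, MeasurableSet (A i)) : μ (⋃ i, A i) = ⨆ i, μ (A i) := by
  cases isEmpty_or_nonempty ι with
  | inl _ => simp [hμ.1]
  | inr _ =>
    obtain ⟨e, he⟩ := exists_surjective_nat ι
    rw [← he.iUnion_comp A, hμ.2 _ fun n => hA (e n), he.iSup_comp fun i => μ (A i)]

theorem union (hμ : SigmaMaxitive μ) {A B : Set E} (hA : MeasurableSet A)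
    (hB : MeasurableSet B) : μ (A ∪ B) = μ A ⊔ μ B := by
  rw [union_eq_iUnion, hμ.iUnion (Bool.forall_bool.2 ⟨hB, hA⟩), iSup_bool_eq]
  rfl

theorem mono (hμ : SigmaMaxitive μ) {A B : Set E} (hA : MeasurableSet A) (hB : MeasurableSet B)
    (hAB : A ⊆ B) : μ A ≤ μ B := by
  rw [← union_eq_right.2 hAB, hμ.union hA hB]
  exact le_sup_left

theorem le_iSup_inter (hμ : SigmaMaxitive μ) {ι : Type*} [Countable ι] {A : ι → Set E}
    (hA : ∀ i, MeasurableSet (A i)) {C : Set E} (hC : MeasurableSet C) (hCA : C ⊆ ⋃ i, A i) :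
    μ C ≤ ⨆ i, μ (C ∩ A i) := by
  rw [← hμ.iUnion fun i => hC.inter (hA i), ← inter_iUnion, inter_eq_left.2 hCA]

end SigmaMaxitive

namespace IsSigmaIdeal

variable {E : Type*} [MeasurableSpace E] {I : Set (Set E)}

theorem measurableSet (hI : IsSigmaIdeal I) {A : Set E} (hA : A ∈ I) : MeasurableSet A :=
  hI.2.1 A hA

theorem mem_of_subset (hI : IsSigmaIdeal I) {A B : Set E} (hB : B ∈ I) (hAB : A ⊆ B)
    (hA : MeasurableSet A) : A ∈ I :=
  hI.2.2.2 A B hB hAB hA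

theorem empty_mem (hI : IsSigmaIdeal I) : ∅ ∈ I :=
  let ⟨_, hA⟩ := hI.1
  hI.mem_of_subset hA (empty_subset _) MeasurableSet.empty

theorem iUnion_mem (hI : IsSigmaIdeal I) {ι : Type*} [Countable ι] {A : ι → Set E}
    (hA : ∀ i, A i ∈ I) : ⋃ i, A i ∈ I := by
  cases isEmpty_or_nonempty ι with
  | inl _ => simpa using hI.empty_mem
  | inr _ =>
    obtain ⟨e, he⟩ := exists_surjective_nat ι
    rw [← he.iUnion_comp A]
    exact hI.2.2.1 _ fun n => hA (e n)

end IsSigmaIdeal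

section Construction

variable {E : Type*} [MeasurableSpace E] {P : PseudoMul} {ν τ : Set E → ℝ≥0∞}

theorem SigmaPrincipal.exists_monotone_essSup (hprin : SigmaPrincipal τ) (hτ : SigmaMaxitive τ)
    {ι : Type*} [Preorder ι] [Countable ι] {I : ι → Set (Set E)} (hI : ∀ i, IsSigmaIdeal (I i))
    (hmono : Monotone I) :
    ∃ M : ι → Set E, Monotone M ∧ ∀ i, M i ∈ I i ∧ ∀ S ∈ I i, τ (S \ M i) = 0 := by
  choose L hL hLmax using fun i => hprin (I i) (hI i)
  have hmem : ∀ i, ⋃ j : Iic i, L j ∈ I i := fun i => (hI i).iUnion_mem fun j => hmono j.2 (hL j)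
  refine ⟨fun i => ⋃ j : Iic i, L j, fun i i' hii' => ?_, fun i => ⟨hmem i, fun S hS => ?_⟩⟩
  · exact iUnion_subset fun j => subset_iUnion_of_subset ⟨j, j.2.trans hii'⟩ subset_rfl
  · have hSm := (hI i).measurableSet hS
    refine le_antisymm ?_ zero_le
    calc τ (S \ ⋃ j : Iic i, L j) ≤ τ (S \ L i) :=
          hτ.mono (hSm.diff ((hI i).measurableSet (hmem i)))
            (hSm.diff ((hI i).measurableSet (hL i)))
            (sdiff_subset_sdiff_right (subset_iUnion_of_subset ⟨i, le_rfl⟩ subset_rfl))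
      _ = 0 := hLmax i S hS

theorem SigmaOFinite.le_of_forall_oFinite (hfin : SigmaOFinite P τ) (hν : SigmaMaxitive ν)
    (hτ : SigmaMaxitive τ) {g : Set E → ℝ≥0∞}
    (hg : ∀ A B, MeasurableSet A → MeasurableSet B → A ⊆ B → g A ≤ g B)
    (hνg : ∀ A, MeasurableSet A → P.OFinite (τ A) → ν A ≤ g A) {B : Set E}
    (hB : MeasurableSet B) : ν B ≤ g B := by
  obtain ⟨F, hF, hFuniv, hFfin⟩ := hfin
  have hBF : ∀ n, MeasurableSet (B ∩ F n) := fun n => hB.inter (hF n)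
  refine (hν.le_iSup_inter hF hB (hFuniv ▸ subset_univ B)).trans (iSup_le fun n => ?_)
  exact (hνg _ (hBF n) ((hFfin n).mono (hτ.mono (hBF n) (hF n) inter_subset_right))).trans
    (hg _ _ (hBF n) hB inter_subset_left)

theorem OAbsCont.le_op_top (hac : OAbsCont P ν τ) (hfin : SigmaOFinite P τ)
    (hν : SigmaMaxitive ν) (hτ : SigmaMaxitive τ) {B : Set E} (hB : MeasurableSet B) :
    ν B ≤ P.op ⊤ (τ B) :=
  hfin.le_of_forall_oFinite hν hτ (fun _ _ hA hB hAB => P.mono_right ⊤ (hτ.mono hA hB hAB)) hac hB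

variable (P ν τ) in
def dominatedIdeal (s : ℝ≥0∞) : Set (Set E) :=
  {A | MeasurableSet A ∧ ∀ C ⊆ A, MeasurableSet C → ν C ≤ P.op s (τ C)}

theorem dominatedIdeal_mono : Monotone (dominatedIdeal P ν τ) :=
  fun _ _ hss' _ hA => ⟨hA.1, fun C hCA hC => (hA.2 C hCA hC).trans (P.mono_left _ hss')⟩

theorem isSigmaIdeal_dominatedIdeal (hν : SigmaMaxitive ν) (hτ : SigmaMaxitive τ) (s : ℝ≥0∞) :
    IsSigmaIdeal (dominatedIdeal P ν τ s) := by
  refine ⟨⟨∅, .empty, fun C hC _ => ?_⟩, fun A hA => hA.1, fun A hA => ?_,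
    fun A B hB hAB hA => ⟨hA, fun C hCA => hB.2 C (hCA.trans hAB)⟩⟩
  · simp [subset_empty_iff.1 hC, hν.1]
  · refine ⟨.iUnion fun n => (hA n).1, fun C hCA hC => ?_⟩
    refine (hν.le_iSup_inter (fun n => (hA n).1) hC hCA).trans (iSup_le fun n => ?_)
    exact ((hA n).2 _ inter_subset_right (hC.inter (hA n).1)).trans
      (P.mono_right s (hτ.mono (hC.inter (hA n).1) hC inter_subset_left))

theorem isSigmaIdeal_setOf_op_le (hτ : SigmaMaxitive τ) {s : ℝ≥0∞} (h0 : 0 < s) (hs : s < ⊤)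
    (A : Set E) (b : ℝ≥0∞) :
    IsSigmaIdeal {C | MeasurableSet C ∧ C ⊆ A ∧ P.op s (τ C) ≤ b} := by
  refine ⟨⟨∅, .empty, empty_subset _, by simp [hτ.1, P.op_zero]⟩, fun C hC => hC.1,
    fun C hC => ⟨.iUnion fun n => (hC n).1, iUnion_subset fun n => (hC n).2.1, ?_⟩,
    fun C D hD hCD hC => ⟨hC, hCD.trans hD.2.1,
      (P.mono_right s (hτ.mono hC hD.1 hCD)).trans hD.2.2⟩⟩
  rw [hτ.2 _ fun n => (hC n).1, P.op_iSup_right h0 hs]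
  exact iSup_le fun n => (hC n).2.2

theorem op_le_of_disjoint_essSup (hν : SigmaMaxitive ν) (hτ : SigmaMaxitive τ)
    (hprin : SigmaPrincipal τ) (hnull : ∀ B, MeasurableSet B → τ B = 0 → ν B = 0)
    {s : ℝ≥0∞} (h0 : 0 < s) (hs : s < ⊤) {M : Set E}
    (hM : ∀ S ∈ dominatedIdeal P ν τ s, τ (S \ M) = 0) {A : Set E} (hA : MeasurableSet A)
    (hAM : Disjoint A M) : P.op s (τ A) ≤ ν A := by
  obtain ⟨N, ⟨hN, hNA, hNle⟩, hNmax⟩ :=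
    hprin _ (isSigmaIdeal_setOf_op_le (P := P) hτ h0 hs A (ν A))
  -- A subset of `A \ N` either has `ν ≤ ν A < s ⊙ τ` or lies in the ideal, hence is `τ`-null.
  have hAN : A \ N ∈ dominatedIdeal P ν τ s := by
    refine ⟨hA.diff hN, fun C hC hCm => ?_⟩
    by_cases hCle : P.op s (τ C) ≤ ν A
    · have hτC : τ C = 0 := by
        simpa [sdiff_eq_left.2 (disjoint_sdiff_left.mono_left hC)] using
          hNmax C ⟨hCm, hC.trans sdiff_subset, hCle⟩
      simp [hnull C hCm hτC]
    · exact (hν.mono hCm hA (hC.trans sdiff_subset)).trans (not_le.1 hCle).le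
  have hτAN : τ (A \ N) = 0 := by
    simpa [sdiff_eq_left.2 (hAM.mono_left sdiff_subset)] using hM _ hAN
  calc P.op s (τ A) = P.op s (τ N) := by
        rw [← union_sdiff_cancel hNA, hτ.union hN (hA.diff hN), hτAN, max_zero]
    _ ≤ ν A := hNle

end Construction

theorem ENNReal.exists_ofReal_rat_btwn {a b : ℝ≥0∞} (h : a < b) :
    ∃ q : ℚ, a < ENNReal.ofReal q ∧ ENNReal.ofReal q < b :=
  let ⟨q, _, haq, hqb⟩ := ENNReal.lt_iff_exists_rat_btwn.1 h
  ⟨q, haq, hqb⟩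

section Integral

variable {E : Type*} [MeasurableSpace E] {P : PseudoMul} {ν τ : Set E → ℝ≥0∞} {f : E → ℝ≥0∞}

theorem op_le_idemInt (B : Set E) {t : ℝ≥0∞} (ht : t < ⊤) :
    P.op t (τ (B ∩ {x | t < f x})) ≤ idemInt P τ f B :=
  le_iSup₂ (f := fun t (_ : t ∈ Iio ⊤) => P.op t (τ (B ∩ {x | t < f x}))) t ht

theorem idemInt_mono (hτ : SigmaMaxitive τ) (hf : Measurable f) {A B : Set E}
    (hA : MeasurableSet A) (hB : MeasurableSet B) (hAB : A ⊆ B) :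
    idemInt P τ f A ≤ idemInt P τ f B :=
  iSup₂_mono fun t _ => P.mono_right t (hτ.mono (hA.inter (hf measurableSet_Ioi))
    (hB.inter (hf measurableSet_Ioi)) (inter_subset_inter_left _ hAB))

theorem idemInt_le_op_top (hτ : SigmaMaxitive τ) (hf : Measurable f) {B : Set E}
    (hB : MeasurableSet B) : idemInt P τ f B ≤ P.op ⊤ (τ B) :=
  iSup₂_le fun _ _ => (P.mono_left _ le_top).trans
    (P.mono_right ⊤ (hτ.mono (hB.inter (hf measurableSet_Ioi)) hB inter_subset_left))

theorem op_top_le_idemInt (hτ : SigmaMaxitive τ) (hf : Measurable f) {B : Set E}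
    (hB : MeasurableSet B) : P.op ⊤ (τ (B ∩ {x | f x = ⊤})) ≤ idemInt P τ f B := by
  rw [P.op_eq_iSup_lt_left ENNReal.zero_lt_top]
  refine iSup_le fun s => (P.mono_right _ ?_).trans (op_le_idemInt B s.2)
  exact hτ.mono (hB.inter (hf (measurableSet_singleton ⊤))) (hB.inter (hf measurableSet_Ioi))
    (inter_subset_inter_right _ fun x (hx : f x = ⊤) => (hx.symm ▸ s.2 : (s : ℝ≥0∞) < f x))

/-- By maxitivity the mass `ν A` is carried by `{u < f < w}`, where `ν ≤ w ⊙ τ`. -/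
theorem le_op_of_lt_of_eq (hν : SigmaMaxitive ν) (hτ : SigmaMaxitive τ) (hf : Measurable f)
    (hdom : ∀ w, {x | f x < w} ∈ dominatedIdeal P ν τ w) {A : Set E} (hA : MeasurableSet A)
    {u w : ℝ≥0∞} (hu : ν (A ∩ {x | f x ≤ u}) < ν A) (hw : ν (A ∩ {x | f x < w}) = ν A) :
    ν A ≤ P.op w (τ (A ∩ {x | u < f x})) := by
  have hAu : MeasurableSet (A ∩ {x | f x ≤ u}) := hA.inter (hf measurableSet_Iic)
  have hAw : MeasurableSet (A ∩ {x | f x < w}) := hA.inter (hf measurableSet_Iio)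
  have hAu' : MeasurableSet (A ∩ {x | u < f x}) := hA.inter (hf measurableSet_Ioi)
  set S := A ∩ {x | f x < w} ∩ {x | u < f x}
  have hS : MeasurableSet S := hAw.inter (hf measurableSet_Ioi)
  have hcover : A ∩ {x | f x < w} ⊆ (A ∩ {x | f x ≤ u}) ∪ S := fun x hx =>
    (le_or_gt (f x) u).imp (fun h => ⟨hx.1, h⟩) fun h => ⟨hx, h⟩
  have hνS : ν A ≤ ν S := by
    have : ν A ≤ ν (A ∩ {x | f x ≤ u}) ⊔ ν S := by
      rw [← hw, ← hν.union hAu hS]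
      exact hν.mono hAw (hAu.union hS) hcover
    exact (le_sup_iff.1 this).resolve_left (not_le.2 hu)
  calc ν A ≤ ν S := hνS
    _ ≤ P.op w (τ S) := (hdom w).2 S (fun x hx => hx.1.2) hS
    _ ≤ P.op w (τ (A ∩ {x | u < f x})) :=
        P.mono_right w (hτ.mono hS hAu' (inter_subset_inter_left _ inter_subset_left))

theorem le_idemInt_of_subset_lt (hν : SigmaMaxitive ν) (hτ : SigmaMaxitive τ)
    (hf : Measurable f) (hdom : ∀ w, {x | f x < w} ∈ dominatedIdeal P ν τ w) {A : Set E}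
    (hA : MeasurableSet A) (hfin : P.OFinite (τ A)) {w₀ : ℝ≥0∞} (hw₀ : w₀ < ⊤)
    (hAw₀ : A ⊆ {x | f x < w₀}) : ν A ≤ idemInt P τ f A := by
  have hAlt : ∀ w, MeasurableSet (A ∩ {x | f x < w}) := fun w => hA.inter (hf measurableSet_Iio)
  have hmono : Monotone fun w => ν (A ∩ {x | f x < w}) := fun w w' h =>
    hν.mono (hAlt w) (hAlt w') (inter_subset_inter_right _ fun x hx => lt_of_lt_of_le hx h)
  have hle : ∀ w, ν (A ∩ {x | f x < w}) ≤ ν A := fun w => hν.mono (hAlt w) hA inter_subset_left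
  -- the level of `f` at which `A` first carries all of its `ν`-mass
  set T := sInf {w | ν (A ∩ {x | f x < w}) = ν A}
  have hT : T < ⊤ := (sInf_le (by simp [inter_eq_left.2 hAw₀])).trans_lt hw₀
  have habove : ∀ w, T < w → ν (A ∩ {x | f x < w}) = ν A := fun w hw =>
    let ⟨_, hw', hw'w⟩ := sInf_lt_iff.1 hw
    le_antisymm (hle w) (hw'.symm.le.trans (hmono hw'w.le))
  have hbelow : ∀ u, u < T → ν (A ∩ {x | f x ≤ u}) < ν A := fun u hu => by
    obtain ⟨u', huu', hu'T⟩ := exists_between hu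
    refine (hν.mono (hA.inter (hf measurableSet_Iic)) (hAlt u')
      (inter_subset_inter_right _ fun x hx => lt_of_le_of_lt hx huu')).trans_lt ?_
    exact (hle u').lt_of_ne fun h =>
      (sInf_le (show u' ∈ {w | ν (A ∩ {x | f x < w}) = ν A} from h)).not_gt hu'T
  rcases eq_zero_or_pos T with hT0 | hT0
  · refine le_of_le_of_eq (le_iInf₂ fun s (hs : 0 < s) => ?_) hfin |>.trans zero_le
    calc ν A = ν (A ∩ {x | f x < s}) := (habove s (hT0 ▸ hs)).symm
      _ ≤ P.op s (τ (A ∩ {x | f x < s})) := (hdom s).2 _ inter_subset_right (hAlt s)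
      _ ≤ P.op s (τ A) := P.mono_right s (hτ.mono (hAlt s) hA inter_subset_left)
  · have hkey : ∀ u : Iio T, ν A ≤ P.op T (τ (A ∩ {x | u < f x})) := fun u => by
      rw [P.op_eq_iInf_gt_left hT0 hT]
      exact le_iInf fun w => le_op_of_lt_of_eq hν hτ hf hdom hA (hbelow u u.2) (habove w w.2)
    have : Nonempty (Iio T) := ⟨⟨0, hT0⟩⟩
    calc ν A ≤ P.op T (⨅ u : Iio T, τ (A ∩ {x | u < f x})) := by
          rw [P.op_iInf_right hT0 hT]
          exact le_iInf hkey
      _ = ⨆ u : Iio T, P.op u (⨅ u' : Iio T, τ (A ∩ {x | u' < f x})) :=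
          P.op_eq_iSup_lt_left hT0 _
      _ ≤ idemInt P τ f A := iSup_le fun u =>
          (P.mono_right _ (iInf_le _ u)).trans (op_le_idemInt A (u.2.trans hT))

theorem le_idemInt_of_oFinite (hν : SigmaMaxitive ν) (hτ : SigmaMaxitive τ) (hf : Measurable f)
    (hdom : ∀ w, {x | f x < w} ∈ dominatedIdeal P ν τ w)
    (hac : ∀ B, MeasurableSet B → ν B ≤ P.op ⊤ (τ B)) {B : Set E} (hB : MeasurableSet B)
    (hfin : P.OFinite (τ B)) : ν B ≤ idemInt P τ f B := by
  have hBtop : MeasurableSet (B ∩ {x | f x = ⊤}) := hB.inter (hf (measurableSet_singleton ⊤))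
  have hBn : ∀ n : ℕ, MeasurableSet (B ∩ {x | f x < n}) := fun n =>
    hB.inter (hf measurableSet_Iio)
  have hcover : B ⊆ (B ∩ {x | f x = ⊤}) ∪ ⋃ n : ℕ, B ∩ {x | f x < n} := fun x hx =>
    (eq_or_ne (f x) ⊤).imp (fun h => ⟨hx, h⟩)
      fun h => mem_iUnion.2 ((ENNReal.exists_nat_gt h).imp fun _ hn => ⟨hx, hn⟩)
  calc ν B ≤ ν (B ∩ {x | f x = ⊤}) ⊔ ⨆ n : ℕ, ν (B ∩ {x | f x < n}) := by
        rw [← hν.iUnion hBn, ← hν.union hBtop (.iUnion hBn)]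
        exact hν.mono hB (hBtop.union (.iUnion hBn)) hcover
    _ ≤ idemInt P τ f B := sup_le ((hac _ hBtop).trans (op_top_le_idemInt hτ hf hB))
        (iSup_le fun n => (le_idemInt_of_subset_lt hν hτ hf hdom (hBn n)
          (hfin.mono (hτ.mono (hBn n) hB inter_subset_left)) (ENNReal.natCast_lt_top n)
          inter_subset_right).trans (idemInt_mono hτ hf (hBn n) hB inter_subset_left))

end Integral

section LevelFun

variable {E : Type*} {M : ℚ → Set E} {x : E}

noncomputable def levelFun (M : ℚ → Set E) (x : E) : ℝ≥0∞ :=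
  ⨅ (q : ℚ) (_ : x ∈ M q), ENNReal.ofReal q

theorem levelFun_le {q : ℚ} (hx : x ∈ M q) : levelFun M x ≤ ENNReal.ofReal q :=
  iInf₂_le q hx

theorem mem_of_levelFun_lt (hM : Monotone M) {q : ℚ} (h : levelFun M x < ENNReal.ofReal q) :
    x ∈ M q := by
  obtain ⟨r, hr⟩ := iInf_lt_iff.1 h
  obtain ⟨hxr, hrq⟩ := iInf_lt_iff.1 hr
  exact hM (by exact_mod_cast (ENNReal.ofReal_lt_ofReal_iff'.1 hrq).1.le) hxr

theorem exists_notMem_of_lt_levelFun {t : ℝ≥0∞} (h : t < levelFun M x) :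
    ∃ q : ℚ, t < ENNReal.ofReal q ∧ x ∉ M q := by
  obtain ⟨q, htq, hq⟩ := ENNReal.exists_ofReal_rat_btwn h
  exact ⟨q, htq, fun hx => (levelFun_le hx).not_gt hq⟩

theorem measurable_levelFun [MeasurableSpace E] (hM : ∀ q, MeasurableSet (M q)) :
    Measurable (levelFun M) := by
  classical
  unfold levelFun
  simp_rw [iInf_eq_if]
  exact .iInf fun q => Measurable.ite (hM q) measurable_const measurable_const

variable [MeasurableSpace E] {P : PseudoMul} {ν τ : Set E → ℝ≥0∞}

theorem setOf_levelFun_lt_mem_dominatedIdeal (hν : SigmaMaxitive ν) (hτ : SigmaMaxitive τ)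
    (hM : Monotone M) (hMdom : ∀ q : ℚ, M q ∈ dominatedIdeal P ν τ (ENNReal.ofReal q))
    (w : ℝ≥0∞) :
    {x | levelFun M x < w} ∈ dominatedIdeal P ν τ w := by
  have hMmeas : ∀ q, MeasurableSet (M q) := fun q => (hMdom q).1
  refine ⟨measurable_levelFun hMmeas measurableSet_Iio, fun C hCw hC => ?_⟩
  have hcover : C ⊆ ⋃ q : {q : ℚ // ENNReal.ofReal q < w}, M q := fun x hx =>
    let ⟨q, hxq, hqw⟩ := ENNReal.exists_ofReal_rat_btwn (hCw hx)
    mem_iUnion.2 ⟨⟨q, hqw⟩, mem_of_levelFun_lt hM hxq⟩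
  refine (hν.le_iSup_inter (fun q : {q : ℚ // ENNReal.ofReal q < w} => hMmeas q) hC hcover).trans
    (iSup_le fun q => ?_)
  calc ν (C ∩ M q) ≤ P.op (ENNReal.ofReal q) (τ (C ∩ M q)) :=
        (hMdom q).2 _ inter_subset_right (hC.inter (hMmeas q))
    _ ≤ P.op w (τ C) := (P.mono_left _ q.2.le).trans
        (P.mono_right w (hτ.mono (hC.inter (hMmeas q)) hC inter_subset_left))

theorem idemInt_levelFun_le (hν : SigmaMaxitive ν) (hτ : SigmaMaxitive τ)
    (hprin : SigmaPrincipal τ) (hnull : ∀ B, MeasurableSet B → τ B = 0 → ν B = 0)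
    (hMmeas : ∀ q, MeasurableSet (M q))
    (hMmax : ∀ q : ℚ, ∀ S ∈ dominatedIdeal P ν τ (ENNReal.ofReal q), τ (S \ M q) = 0)
    {B : Set E} (hB : MeasurableSet B) : idemInt P τ (levelFun M) B ≤ ν B := by
  refine iSup₂_le fun t (ht : t < ⊤) => ?_
  rcases eq_zero_or_pos t with rfl | ht0
  · simp [P.zero_op]
  set Bt := B ∩ {x | t < levelFun M x}
  have hBt : MeasurableSet Bt := hB.inter (measurable_levelFun hMmeas measurableSet_Ioi)
  have hcover : Bt ⊆ ⋃ q : {q : ℚ // t < ENNReal.ofReal q}, (M q)ᶜ := fun x hx =>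
    let ⟨q, htq, hxq⟩ := exists_notMem_of_lt_levelFun hx.2
    mem_iUnion.2 ⟨⟨q, htq⟩, hxq⟩
  calc P.op t (τ Bt) ≤ P.op t (⨆ q : {q : ℚ // t < ENNReal.ofReal q}, τ (Bt ∩ (M q)ᶜ)) :=
        P.mono_right t (hτ.le_iSup_inter
          (fun q : {q : ℚ // t < ENNReal.ofReal q} => (hMmeas q).compl) hBt hcover)
    _ = ⨆ q : {q : ℚ // t < ENNReal.ofReal q}, P.op t (τ (Bt ∩ (M q)ᶜ)) :=
        P.op_iSup_right ht0 ht _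
    _ ≤ ν B := iSup_le fun q => by
        have hBq : MeasurableSet (Bt ∩ (M q)ᶜ) := hBt.inter (hMmeas q).compl
        calc P.op t (τ (Bt ∩ (M q)ᶜ)) ≤ P.op (ENNReal.ofReal q) (τ (Bt ∩ (M q)ᶜ)) :=
              P.mono_left _ q.2.le
          _ ≤ ν (Bt ∩ (M q)ᶜ) :=
              op_le_of_disjoint_essSup hν hτ hprin hnull (ht0.trans q.2) ENNReal.ofReal_lt_top
                (hMmax q) hBq (disjoint_compl_left.mono_left inter_subset_right)
          _ ≤ ν B := hν.mono hBq hB (inter_subset_left.trans inter_subset_left)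

end LevelFun

theorem OAbsCont.exists_idemInt_eq {E : Type*} [MeasurableSpace E] {P : PseudoMul}
    {ν τ : Set E → ℝ≥0∞} (hac : OAbsCont P ν τ) (hν : SigmaMaxitive ν) (hτ : SigmaMaxitive τ)
    (hfin : SigmaOFinite P τ) (hprin : SigmaPrincipal τ) :
    ∃ c : E → ℝ≥0∞, Measurable c ∧ ∀ B, MeasurableSet B → ν B = idemInt P τ c B := by
  have hac' : ∀ B, MeasurableSet B → ν B ≤ P.op ⊤ (τ B) := fun B hB =>
    hac.le_op_top hfin hν hτ hB
  have hnull : ∀ B, MeasurableSet B → τ B = 0 → ν B = 0 := fun B hB h0 => by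
    simpa [h0, P.op_zero] using hac' B hB
  obtain ⟨M, hMmono, hM⟩ := hprin.exists_monotone_essSup hτ
    (fun q : ℚ => isSigmaIdeal_dominatedIdeal hν hτ (ENNReal.ofReal q))
    (dominatedIdeal_mono.comp fun _ _ h => ENNReal.ofReal_le_ofReal (Rat.cast_le.2 h))
  have hMmeas : ∀ q, MeasurableSet (M q) := fun q => (hM q).1.1
  have hc := measurable_levelFun hMmeas
  have hdom := setOf_levelFun_lt_mem_dominatedIdeal hν hτ hMmono fun q => (hM q).1
  refine ⟨levelFun M, hc, fun B hB => le_antisymm ?_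
    (idemInt_levelFun_le hν hτ hprin hnull hMmeas (fun q => (hM q).2) hB)⟩
  exact hfin.le_of_forall_oFinite hν hτ (fun _ _ => idemInt_mono hτ hc)
    (fun _ hA hAfin => le_idemInt_of_oFinite hν hτ hc hdom hac' hA hAfin) hB

/-- The Sugeno–Murofushi idempotent Radon–Nikodym theorem. -/
theorem sugeno_murofushi
    {E : Type*} [MeasurableSpace E] (P : PseudoMul)
    (ν τ : Set E → ℝ≥0∞) (hν : SigmaMaxitive ν) (hτ : SigmaMaxitive τ)
    (hfin : SigmaOFinite P τ) (hprin : SigmaPrincipal τ) :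
    OAbsCont P ν τ ↔
      ∃ c : E → ℝ≥0∞, Measurable c ∧
        ∀ B : Set E, MeasurableSet B → ν B = idemInt P τ c B :=
  ⟨fun hac => hac.exists_idemInt_eq hν hτ hfin hprin,
    fun ⟨_, hc, hνc⟩ B hB _ => (hνc B hB).trans_le (idemInt_le_op_top hτ hc hB)⟩
end

section
/- Let ⊙ be a pseudo-multiplication on [0,∞]. The following conditions are equivalent: (i) ⊙ is non-degenerate, i.e., 1⊙ is ⊙-finite; (ii) there exists a positive ⊙-finite element; (iii) ⊙ is commutative on [0, 1⊙], i.e., s ⊙ t = t ⊙ s for all s, t ∈ [0, 1⊙]; (iv) the set F⊙ of ⊙-finite elements is either [0,∞] or of the form [0, φ) for some φ with 1⊙ < φ ≤ ∞. -/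
open scoped ENNReal
open Set

/-!
Write `c(t) = ⨅_{s>0} s ⊙ t` (`iInfOp`). By associativity and continuity of `s ⊙ ·`,
`c(t) ≤ s ⊙ c(t)` for `s > 0`, so `c(t)` is `⊙`-finite only if it is `0`; since `c` is upper
semicontinuous, every `⊙`-finite `t ∈ (0,∞)` lies below a larger `⊙`-finite element. The
`⊙`-finite elements form a down-set, which gives (i) ⇒ (iv); and `c(1⊙) ⊙ t ≤ c(t)` gives
(ii) ⇒ (i).

For (i) ⇒ (iii): by the intermediate value theorem `1⊙` is a two-sided identity on `[0, 1⊙]` and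
an idempotent `e` satisfies `z ⊙ e = e ⊙ z = z` for `z ≤ e`, so `s ⊙ t = t ⊙ s = min s t` when
an idempotent lies between `s` and `t`. Otherwise let `b` be the least idempotent above
`min s t`. The powers of any `w < b` decrease to an idempotent, hence fall below `min s t`.
Powers of `w` commute with each other, so squeezing `s` and `t` between consecutive powers of `w`
and letting `w → b` yields `t ⊙ s ≤ s ⊙ t`.
-/

open Filter Topology

lemma exists_le_apply_and_apply_succ_lt {α : Type*} [LinearOrder α] {f : ℕ → α} {a : α}
    (h0 : a ≤ f 0) (h : ∃ n, f n < a) : ∃ m, a ≤ f m ∧ f (m + 1) < a := by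
  by_contra! H
  obtain ⟨n, hn⟩ := h
  have hle : ∀ k, a ≤ f k := fun k => Nat.rec h0 H k
  exact (hle n).not_gt hn

namespace PseudoMul

noncomputable def iInfOp (P : PseudoMul) (t : ℝ≥0∞) : ℝ≥0∞ :=
  ⨅ s ∈ Ioi (0 : ℝ≥0∞), P.op s t

def npow (P : PseudoMul) : ℕ → ℝ≥0∞ → ℝ≥0∞
  | 0, _ => P.one
  | n + 1, w => P.op w (P.npow n w)

def idempotentsIcc (P : PseudoMul) (m : ℝ≥0∞) : Set ℝ≥0∞ :=
  {e | P.op e e = e ∧ m ≤ e ∧ e ≤ P.one}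

variable {P : PseudoMul} {b c e m s t w x x' y y' z ε : ℝ≥0∞}

section Basic

variable (P)

lemma one_pos : 0 < P.one :=
  pos_iff_ne_zero.2 fun h =>
    one_ne_zero ((P.one_op (1 : ℝ≥0∞)).symm.trans (by rw [h, P.zero_op]))

lemma continuousAt_op (hs : 0 < s) (hs' : s < ⊤) :
    ContinuousAt (fun p : ℝ≥0∞ × ℝ≥0∞ => P.op p.1 p.2) (s, t) :=
  P.continuousOn.continuousAt ((isOpen_Ioo.prod isOpen_univ).mem_nhds ⟨⟨hs, hs'⟩, mem_univ t⟩)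

lemma continuous_op (hs : 0 < s) (hs' : s < ⊤) : Continuous (P.op s) :=
  continuous_iff_continuousAt.2 fun _ =>
    (P.continuousAt_op hs hs').comp (continuous_const.prodMk continuous_id).continuousAt

lemma op_pos (hs : 0 < s) (ht : 0 < t) : 0 < P.op s t :=
  pos_iff_ne_zero.2 fun h => (P.no_zero_divisors s t h).elim hs.ne' ht.ne'

lemma iInfOp_mono : Monotone P.iInfOp :=
  fun _ _ h => iInf₂_mono fun s _ => P.mono_right s h

lemma exists_op_lt_of_iInfOp_lt (h : P.iInfOp t < ε) : ∃ s, 0 < s ∧ s < ⊤ ∧ P.op s t < ε := by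
  obtain ⟨s, hs⟩ := iInf_lt_iff.1 h
  obtain ⟨hs0, hlt⟩ := iInf_lt_iff.1 hs
  exact ⟨min s 1, lt_min hs0 zero_lt_one, min_lt_of_right_lt ENNReal.one_lt_top,
    (P.mono_left t (min_le_left s 1)).trans_lt hlt⟩

lemma le_op_of_forall_lt (hx : 0 < x) (hxb : x < b) (hyb : y < b)
    (h : ∀ x' ∈ Ioo x b, ∀ y' ∈ Ioo y b, c ≤ P.op x' y') : c ≤ P.op x y := by
  have := nhdsGT_neBot_of_exists_gt ⟨b, hxb⟩
  have := nhdsGT_neBot_of_exists_gt ⟨b, hyb⟩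
  have hlim : Tendsto (fun p : ℝ≥0∞ × ℝ≥0∞ => P.op p.1 p.2) (𝓝[>] x ×ˢ 𝓝[>] y) (𝓝 (P.op x y)) :=
    (P.continuousAt_op hx (hxb.trans_le le_top)).tendsto.mono_left
      (nhds_prod_eq (x := x) (y := y) ▸ prod_mono nhdsWithin_le_nhds nhdsWithin_le_nhds)
  exact ge_of_tendsto hlim (mem_of_superset (prod_mem_prod (Ioo_mem_nhdsGT hxb)
    (Ioo_mem_nhdsGT hyb)) fun p hp => h p.1 hp.1 p.2 hp.2)

end Basic

lemma ofinite_iff_iInfOp_eq_zero : P.OFinite t ↔ P.iInfOp t = 0 := Iff.rfl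

lemma OFinite.exists_op_lt (ht : P.OFinite t) (hε : 0 < ε) :
    ∃ s, 0 < s ∧ s < ⊤ ∧ P.op s t < ε :=
  P.exists_op_lt_of_iInfOp_lt ((ofinite_iff_iInfOp_eq_zero.1 ht).trans_lt hε)

lemma OFinite.of_le (ht : P.OFinite t) (h : s ≤ t) : P.OFinite s :=
  nonpos_iff_eq_zero.1 ((P.iInfOp_mono h).trans_eq ht)

lemma upperSemicontinuous_iInfOp : UpperSemicontinuous P.iInfOp := by
  intro t ε hε
  obtain ⟨s, hs0, hs, hlt⟩ := P.exists_op_lt_of_iInfOp_lt hε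
  filter_upwards [(P.continuous_op hs0 hs).continuousAt.eventually_lt continuousAt_const hlt]
    with t' ht'
  exact (iInf₂_le s hs0).trans_lt ht'

lemma iInfOp_le_op_iInfOp (hs : 0 < s) (hs' : s < ⊤) : P.iInfOp t ≤ P.op s (P.iInfOp t) := by
  have : Nonempty (Ioi (0 : ℝ≥0∞)) := ⟨⟨1, zero_lt_one' ℝ≥0∞⟩⟩
  rw [iInfOp, iInf_subtype', Monotone.map_ciInf_of_continuousAt
    (P.continuous_op hs hs').continuousAt (P.mono_right s)]
  exact le_iInf fun r => (iInf_le _ ⟨P.op s r, P.op_pos hs r.2⟩).trans_eq (P.assoc _ _ _)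

lemma ofinite_of_ofinite_iInfOp (h : P.OFinite (P.iInfOp t)) : P.OFinite t := by
  by_contra ht
  obtain ⟨s, hs, hs', hlt⟩ := h.exists_op_lt (pos_iff_ne_zero.2 ht)
  exact (iInfOp_le_op_iInfOp hs hs').not_gt hlt

lemma OFinite.exists_gt (ht : P.OFinite t) (h0 : 0 < t) (htop : t ≠ ⊤) :
    ∃ t', t < t' ∧ P.OFinite t' := by
  have hev : ∀ᶠ t' in 𝓝 t, P.iInfOp t' < t :=
    upperSemicontinuous_iInfOp t t ((ofinite_iff_iInfOp_eq_zero.1 ht).trans_lt h0)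
  have := nhdsGT_neBot_of_exists_gt ⟨⊤, htop.lt_top⟩
  obtain ⟨t', htt', hlt⟩ :=
    ((eventually_mem_nhdsWithin (s := Ioi t)).and (hev.filter_mono nhdsWithin_le_nhds)).exists
  exact ⟨t', htt', ofinite_of_ofinite_iInfOp (ht.of_le hlt.le)⟩

lemma nondegenerate_of_ofinite (h0 : 0 < t) (ht : P.OFinite t) : P.Nondegenerate := by
  have hle : P.op (P.iInfOp P.one) t ≤ P.iInfOp t := le_iInf₂ fun s hs =>
    (P.mono_left t (iInf₂_le s hs)).trans_eq
      ((P.assoc s P.one t).trans (congrArg (P.op s) (P.one_op t)))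
  exact (P.no_zero_divisors _ _ (nonpos_iff_eq_zero.1 (hle.trans_eq ht))).resolve_right h0.ne'

lemma nondegenerate_of_op_one (h : ∀ s ≤ P.one, P.op s P.one = s) : P.Nondegenerate := by
  by_contra hN
  obtain ⟨s, hs0, hs⟩ := exists_between (lt_min (pos_iff_ne_zero.2 hN) P.one_pos)
  have hs1 : s ≤ P.one := (hs.trans_le (min_le_right _ _)).le
  exact ((iInf₂_le s hs0).trans_eq (h s hs1)).not_gt (hs.trans_le (min_le_left _ _))

lemma Nondegenerate.setOf_ofinite (hN : P.Nondegenerate) :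
    {t | P.OFinite t} = univ ∨ ∃ φ, P.one < φ ∧ {t | P.OFinite t} = Iio φ := by
  by_cases htop : P.OFinite ⊤
  · exact Or.inl (eq_univ_of_forall fun t => htop.of_le le_top)
  have hgt : ∀ t, P.OFinite t → ∃ t', max t P.one < t' ∧ P.OFinite t' := fun t ht => by
    have hmax : P.OFinite (max t P.one) := by
      rcases max_choice t P.one with h | h <;> rw [h] <;> assumption
    exact hmax.exists_gt (lt_max_of_lt_right P.one_pos) fun h => htop (h ▸ hmax)
  obtain ⟨φ, hφ, hφF⟩ := hgt _ hN
  refine Or.inr ⟨sSup {t | P.OFinite t}, (le_max_right _ _).trans_lt (hφ.trans_le (le_sSup hφF)),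
    Set.ext fun t => ⟨fun ht => ?_, fun ht => ?_⟩⟩
  · obtain ⟨t', htt', ht'⟩ := hgt t ht
    exact (le_max_left _ _).trans_lt (htt'.trans_le (le_sSup ht'))
  · obtain ⟨t', ht', htt'⟩ := lt_sSup_iff.1 (mem_Iio.1 ht)
    exact OFinite.of_le ht' htt'.le

lemma OFinite.exists_op_eq (ht : P.OFinite t) (hz : z ≤ t) : ∃ u, P.op u t = z := by
  rcases eq_or_ne z 0 with rfl | hz0
  · exact ⟨0, P.zero_op t⟩
  obtain ⟨s, hs0, -, hs⟩ := ht.exists_op_lt (pos_iff_ne_zero.2 hz0)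
  have ha : 0 < min s P.one := lt_min hs0 P.one_pos
  have hcont : ContinuousOn (fun u => P.op u t) (Icc (min s P.one) P.one) :=
    (P.continuousOn_left t).mono fun u hu => ha.trans_le hu.1
  have hz' : z ∈ Icc (P.op (min s P.one) t) (P.op P.one t) :=
    ⟨((P.mono_left t (min_le_left _ _)).trans_lt hs).le, (P.one_op t).symm ▸ hz⟩
  obtain ⟨u, -, hu⟩ := intermediate_value_Icc (min_le_right _ _) hcont hz'
  exact ⟨u, hu⟩

lemma OFinite.op_idem_of_le (he : P.OFinite e) (hee : P.op e e = e) (hz : z ≤ e) :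
    P.op z e = z := by
  obtain ⟨u, rfl⟩ := he.exists_op_eq hz
  rw [P.assoc, hee]

lemma Nondegenerate.op_one (hN : P.Nondegenerate) (hs : s ≤ P.one) : P.op s P.one = s :=
  OFinite.op_idem_of_le hN (P.one_op _) hs

lemma Nondegenerate.idem_op_of_le (hN : P.Nondegenerate) (hee : P.op e e = e) (he : e ≤ P.one)
    (hz : z ≤ e) : P.op e z = z := by
  rcases he.eq_or_lt with rfl | he1
  · exact P.one_op z
  rcases eq_or_ne z 0 with rfl | hz0
  · exact P.op_zero e
  have he0 : 0 < e := (pos_iff_ne_zero.2 hz0).trans_le hz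
  have hz' : z ∈ Icc (P.op e 0) (P.op e P.one) := by
    rw [P.op_zero, hN.op_one he]
    exact ⟨zero_le, hz⟩
  obtain ⟨v, -, rfl⟩ := intermediate_value_Icc zero_le
    (P.continuous_op he0 (he1.trans_le le_top)).continuousOn hz'
  rw [← P.assoc, hee]

lemma Nondegenerate.op_comm_of_le_idem_le (hN : P.Nondegenerate) (hee : P.op e e = e)
    (hse : s ≤ e) (het : e ≤ t) (ht : t ≤ P.one) : P.op s t = P.op t s := by
  have he1 := het.trans ht
  have hleft : P.op s t = s := le_antisymm
    ((P.mono_right s ht).trans_eq (hN.op_one (hse.trans he1)))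
    (((OFinite.of_le hN he1).op_idem_of_le hee hse).symm.trans_le (P.mono_right s het))
  have hright : P.op t s = s := le_antisymm
    ((P.mono_left s ht).trans_eq (P.one_op s))
    ((hN.idem_op_of_le hee he1 hse).symm.trans_le (P.mono_left s het))
  rw [hleft, hright]

@[simp] lemma npow_zero (w : ℝ≥0∞) : P.npow 0 w = P.one := rfl

lemma npow_succ' (n : ℕ) (w : ℝ≥0∞) : P.npow (n + 1) w = P.op w (P.npow n w) := rfl

lemma npow_add (m n : ℕ) (w : ℝ≥0∞) : P.npow (m + n) w = P.op (P.npow m w) (P.npow n w) := by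
  induction m with
  | zero => rw [Nat.zero_add, npow_zero, P.one_op]
  | succ m ih => rw [Nat.succ_add, npow_succ', ih, npow_succ', P.assoc]

lemma npow_comm (m n : ℕ) (w : ℝ≥0∞) :
    P.op (P.npow m w) (P.npow n w) = P.op (P.npow n w) (P.npow m w) := by
  rw [← npow_add, ← npow_add, Nat.add_comm]

lemma npow_antitone (hw : w ≤ P.one) : Antitone fun n => P.npow n w :=
  antitone_nat_of_succ_le fun _ => (P.mono_left _ hw).trans_eq (P.one_op _)

lemma Nondegenerate.npow_one (hN : P.Nondegenerate) (hw : w ≤ P.one) : P.npow 1 w = w :=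
  hN.op_one hw

lemma Nondegenerate.npow_succ (hN : P.Nondegenerate) (hw : w ≤ P.one) (n : ℕ) :
    P.npow (n + 1) w = P.op (P.npow n w) w := by
  rw [npow_add, hN.npow_one hw]

lemma Nondegenerate.iInf_npow_idem (hN : P.Nondegenerate) (hw : w < P.one) :
    P.op (⨅ n, P.npow n w) (⨅ n, P.npow n w) = ⨅ n, P.npow n w := by
  set L := ⨅ n, P.npow n w
  rcases eq_or_ne L 0 with hL | hL
  · rw [hL, P.zero_op]
  have hLtop : L < ⊤ :=
    ((iInf_le (fun n => P.npow n w) 1).trans_eq (hN.npow_one hw.le)).trans_lt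
      (hw.trans_le le_top)
  have hlim : Tendsto (fun n => P.npow n w) atTop (𝓝 L) :=
    tendsto_atTop_iInf (npow_antitone hw.le)
  have hsq : Tendsto (fun n => P.op (P.npow n w) (P.npow n w)) atTop (𝓝 (P.op L L)) :=
    (P.continuousAt_op (pos_iff_ne_zero.2 hL) hLtop).tendsto.comp (hlim.prodMk_nhds hlim)
  have hdouble := hlim.comp (tendsto_id.atTop_add_atTop tendsto_id)
  simp only [Function.comp_def, id, npow_add] at hdouble
  exact tendsto_nhds_unique hsq hdouble

lemma exists_isLeast_idempotentsIcc (hm : 0 < m) (hm1 : m ≤ P.one) :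
    ∃ b, IsLeast (P.idempotentsIcc m) b := by
  have h1 : P.one ∈ P.idempotentsIcc m := ⟨P.one_op _, hm1, le_rfl⟩
  refine ⟨sInf (P.idempotentsIcc m), ?_, fun e he => sInf_le he⟩
  have hmb : m ≤ sInf (P.idempotentsIcc m) := le_sInf fun e he => he.2.1
  have hb1 : sInf (P.idempotentsIcc m) ≤ P.one := sInf_le h1
  refine ⟨?_, hmb, hb1⟩
  rcases hb1.eq_or_lt with hb | hb
  · rw [hb]
    exact P.one_op _
  have hcont : ContinuousAt (fun e => P.op e e) (sInf (P.idempotentsIcc m)) :=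
    (P.continuousAt_op (hm.trans_le hmb) (hb.trans_le le_top)).comp (f := fun e => (e, e))
      (continuous_id.prodMk continuous_id).continuousAt
  exact tendsto_nhds_unique_of_frequently_eq hcont tendsto_id
    ((mem_closure_iff_frequently.1 (sInf_mem_closure ⟨_, h1⟩)).mono fun e he => he.1)

lemma Nondegenerate.op_le_op_of_npow_lt (hN : P.Nondegenerate) (hw : w ≤ P.one)
    (hx : x ≤ P.one) (hy : y ≤ P.one) (hxw : ∃ n, P.npow n w < x) (hyw : ∃ n, P.npow n w < y)
    (hx' : x < P.op x' w) (hy' : y < P.op y' w) : P.op y x ≤ P.op x' y' := by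
  obtain ⟨m, hxm, hmx⟩ := exists_le_apply_and_apply_succ_lt hx hxw
  obtain ⟨n, hyn, hny⟩ := exists_le_apply_and_apply_succ_lt hy hyw
  have hmx' : P.npow m w ≤ x' :=
    ((P.mono_left w).reflect_lt ((hN.npow_succ hw m ▸ hmx).trans hx')).le
  have hny' : P.npow n w ≤ y' :=
    ((P.mono_left w).reflect_lt ((hN.npow_succ hw n ▸ hny).trans hy')).le
  calc P.op y x ≤ P.op (P.npow n w) (P.npow m w) := (P.mono_left x hyn).trans (P.mono_right _ hxm)
    _ = P.op (P.npow m w) (P.npow n w) := npow_comm n m w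
    _ ≤ P.op x' y' := (P.mono_left _ hmx').trans (P.mono_right x' hny')

lemma Nondegenerate.exists_npow_lt_of_isLeast (hN : P.Nondegenerate)
    (hb : IsLeast (P.idempotentsIcc m) b) (hw : w < b) : ∃ n, P.npow n w < m := by
  have hw1 : w < P.one := hw.trans_le hb.1.2.2
  refine iInf_lt_iff.1 (lt_of_not_ge fun hm => ?_)
  have hLw : ⨅ n, P.npow n w ≤ w :=
    (iInf_le (fun n => P.npow n w) 1).trans_eq (hN.npow_one hw1.le)
  exact (hb.2 ⟨hN.iInf_npow_idem hw1, hm, hLw.trans hw1.le⟩).not_gt (hLw.trans_lt hw)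

lemma Nondegenerate.op_le_op_of_isLeast (hN : P.Nondegenerate) (hm : 0 < m) (hx : m ≤ x)
    (hy : m ≤ y) (hb : IsLeast (P.idempotentsIcc m) b) (hxb : x < b) (hyb : y < b) :
    P.op y x ≤ P.op x y := by
  obtain ⟨hbb, -, hb1⟩ := hb.1
  have hbF : P.OFinite b := OFinite.of_le hN hb1
  have hright : ∀ z z', m ≤ z → z < z' → z' < b → ∀ᶠ w in 𝓝 b, z < P.op z' w :=
    fun z z' hz hzz' hz'b =>
      (P.continuous_op (hm.trans_le (hz.trans hzz'.le)) (hz'b.trans_le le_top)).continuousAt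
        |>.eventually_const_lt (by rwa [hbF.op_idem_of_le hbb hz'b.le])
  have := nhdsLT_neBot_of_exists_lt ⟨x, hxb⟩
  refine P.le_op_of_forall_lt (hm.trans_le hx) hxb hyb fun x' ⟨hxx', hx'b⟩ y' ⟨hyy', hy'b⟩ => ?_
  obtain ⟨w, hwb, hxw, hyw⟩ := ((eventually_mem_nhdsWithin (s := Iio b)).and
    (((hright x x' hx hxx' hx'b).and (hright y y' hy hyy' hy'b)).filter_mono
      nhdsWithin_le_nhds)).exists
  obtain ⟨n, hn⟩ := hN.exists_npow_lt_of_isLeast hb hwb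
  exact hN.op_le_op_of_npow_lt (hwb.le.trans hb1) (hxb.le.trans hb1) (hyb.le.trans hb1)
    ⟨n, hn.trans_le hx⟩ ⟨n, hn.trans_le hy⟩ hxw hyw

lemma Nondegenerate.op_comm (hN : P.Nondegenerate) (hs : s ≤ P.one) (ht : t ≤ P.one) :
    P.op s t = P.op t s := by
  rcases eq_or_ne s 0 with rfl | hs0
  · rw [P.zero_op, P.op_zero]
  rcases eq_or_ne t 0 with rfl | ht0
  · rw [P.zero_op, P.op_zero]
  have hm : 0 < min s t := lt_min (pos_iff_ne_zero.2 hs0) (pos_iff_ne_zero.2 ht0)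
  obtain ⟨b, hb⟩ := P.exists_isLeast_idempotentsIcc hm ((min_le_left s t).trans hs)
  rcases le_or_gt b (max s t) with hbM | hMb
  · obtain ⟨hbb, hmb, -⟩ := hb.1
    rcases le_total s t with hst | hts
    · rw [min_eq_left hst] at hmb
      rw [max_eq_right hst] at hbM
      exact hN.op_comm_of_le_idem_le hbb hmb hbM ht
    · rw [min_eq_right hts] at hmb
      rw [max_eq_left hts] at hbM
      exact (hN.op_comm_of_le_idem_le hbb hmb hbM hs).symm
  · have hsb := (le_max_left s t).trans_lt hMb
    have htb := (le_max_right s t).trans_lt hMb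
    exact le_antisymm
      (hN.op_le_op_of_isLeast hm (min_le_right s t) (min_le_left s t) hb htb hsb)
      (hN.op_le_op_of_isLeast hm (min_le_left s t) (min_le_right s t) hb hsb htb)

end PseudoMul

/-- Characterizations of non-degeneracy of a pseudo-multiplication. -/
theorem nondegenerate_tfae (P : PseudoMul) :
    [P.Nondegenerate,
      ∃ t : ℝ≥0∞, 0 < t ∧ P.OFinite t,
      ∀ s t : ℝ≥0∞, s ≤ P.one → t ≤ P.one → P.op s t = P.op t s,
      {t : ℝ≥0∞ | P.OFinite t} = univ ∨
        ∃ φ : ℝ≥0∞, P.one < φ ∧ {t : ℝ≥0∞ | P.OFinite t} = Iio φ].TFAE := by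
  tfae_have 1 → 2 := fun hN => ⟨P.one, P.one_pos, hN⟩
  tfae_have 2 → 1 := fun ⟨_, ht0, ht⟩ => PseudoMul.nondegenerate_of_ofinite ht0 ht
  tfae_have 1 → 3 := fun hN _ _ hs ht => hN.op_comm hs ht
  tfae_have 3 → 1 := fun h => PseudoMul.nondegenerate_of_op_one fun s hs =>
    (h s P.one hs le_rfl).trans (P.one_op s)
  tfae_have 1 → 4 := PseudoMul.Nondegenerate.setOf_ofinite
  tfae_have 4 → 1 := by
    rintro (h | ⟨φ, hφ, h⟩)
    · exact (h.symm ▸ mem_univ P.one : P.one ∈ {t | P.OFinite t})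
    · exact (h.symm ▸ hφ : P.one ∈ {t | P.OFinite t})
  tfae_finish
end
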